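/- Let Φ be the fixed point starting with 0 of the morphism 0 ↦ 00101, 1 ↦ 11011. For every C ≥ 4, for all n ≥ 132·5^{C−4} and every integer D with −C ≤ D ≤ C, there exists a factor u of Φ with |u| = n and |u|_0 = ⌊n/3⌋ + D. -/

import Mathlib

/-!
Since `Φ = φ(Φ)`, the factor of `Φ` of length `5m + r` (`r < 5`) at position `5i` is the φ-image of
the factor of length `m` at `i`, followed by a proper prefix of `φ(a)` for a letter `a`. The zero
excess `3|u|_0 - |u|` doubles under φ and lies in `[-2, 5]` on such a prefix, so the excess at
`(5i, 5m + r)` is twice the excess at `(i, m)` up to an error in `[-2, 5]`. On the lengths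
`n ∈ [132, 660)` a computation shows that the prefix has excess `≥ 12` and that a factor at
position 5973 or 5989 has excess `≤ -12 - (n mod 3)`; hence every further factor 5 in `n` buys one
more unit of `|u|_0 - ⌊n/3⌋` in both directions. Sliding a window changes its number of zeros by at
most one, so every value in between is attained.
-/

/-- the 5-uniform morphism φ: 0 ↦ 00101, 1 ↦ 11011 (on letters). -/
def phiMap (x : ℕ) : List ℕ := if x = 0 then [0, 0, 1, 0, 1] else [1, 1, 0, 1, 1]

/-- φ applied to a word. -/
def phiL (l : List ℕ) : List ℕ := l.flatMap phiMap

/-- `Phi m` is the `m`-th letter (0-indexed) of the fixed point Φ = φ^ω(0) of φ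
starting with 0: `φ^[m+1]([0])` has length `5^(m+1) > m` and is a prefix of Φ. -/
def Phi (m : ℕ) : ℕ := (phiL^[m + 1] [0]).getD m 0

/-- the length-`n` factor of `w` starting at position `i`. -/
def factorAt (w : ℕ → ℕ) (i n : ℕ) : List ℕ := (List.range n).map (fun j => w (i + j))

/-- `u` is a factor of the infinite word `w`. -/
def IsFactor (w : ℕ → ℕ) (u : List ℕ) : Prop := ∃ i, u = factorAt w i u.length

lemma exists_eq_of_abs_sub_le_one {f : ℕ → ℤ} (hf : ∀ i, |f (i + 1) - f i| ≤ 1)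
    {a b : ℕ} {t : ℤ} (ha : f a ≤ t) (hb : t ≤ f b) : ∃ i, f i = t := by
  wlog hab : a ≤ b generalizing f t a b
  · have hf' : ∀ i, |(-f) (i + 1) - (-f) i| ≤ 1 := fun i => by
      simpa only [Pi.neg_apply, neg_sub_neg, abs_sub_comm] using hf i
    obtain ⟨i, hi⟩ := this hf' (neg_le_neg hb) (neg_le_neg ha) (le_of_not_ge hab)
    exact ⟨i, neg_inj.mp hi⟩
  induction b, hab using Nat.le_induction with
  | base => exact ⟨a, le_antisymm ha hb⟩
  | succ b _ ih =>
    by_cases h : t ≤ f b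
    · exact ih h
    · exact ⟨b + 1, by linarith [(abs_le.mp (hf b)).2]⟩

lemma Nat.induction_on_mul_pow_le {b c : ℕ} (hb : 1 < b) (hc : 0 < c) {P : ℕ → ℕ → Prop}
    (base : ∀ n, c ≤ n → n < b * c → P 0 n)
    (step : ∀ k n, b * c ≤ n → P k (n / b) → P (k + 1) n)
    (anti : ∀ k n, P (k + 1) n → P k n) :
    ∀ k n, c * b ^ k ≤ n → P k n := by
  intro k n
  induction n using Nat.strong_induction_on generalizing k with
  | _ n ih =>
    intro h
    have hdiv : n / b < n := Nat.div_lt_self (by nlinarith [Nat.one_le_pow k b (by omega)]) hb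
    rcases lt_or_ge n (b * c) with hn | hn
    · obtain rfl : k = 0 := by
        by_contra hk
        have : b ^ 1 ≤ b ^ k := Nat.pow_le_pow_right (by omega) (by omega)
        nlinarith
      exact base n (by simpa using h) hn
    · cases k with
      | zero => exact anti 0 n (step 0 n hn (ih _ hdiv 0 (by
          rw [pow_zero, mul_one, Nat.le_div_iff_mul_le (by omega)]; linarith)))
      | succ k => exact step k n hn (ih _ hdiv k (by
          rw [Nat.le_div_iff_mul_le (by omega)]; rwa [pow_succ, ← mul_assoc] at h))

section Factor

variable (w : ℕ → ℕ)

@[simp]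
lemma length_factorAt (i n : ℕ) : (factorAt w i n).length = n := by
  simp [factorAt]

lemma factorAt_add (i m n : ℕ) :
    factorAt w i (m + n) = factorAt w i m ++ factorAt w (i + m) n := by
  simp [factorAt, List.range_add, Nat.add_assoc]

lemma factorAt_one (i : ℕ) : factorAt w i 1 = [w i] := rfl

lemma take_factorAt (i r n : ℕ) : (factorAt w i n).take r = factorAt w i (min r n) := by
  rw [factorAt, ← List.map_take, List.take_range, factorAt]

lemma abs_count_factorAt_succ_sub_le (a i n : ℕ) :
    |((factorAt w (i + 1) n).count a : ℤ) - (factorAt w i n).count a| ≤ 1 := by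
  have h := factorAt_add w i 1 n
  rw [add_comm 1 n, factorAt_add, factorAt_one, factorAt_one] at h
  have hc := congrArg (List.count a) h
  simp only [List.count_append, List.count_singleton] at hc
  rw [abs_le]
  constructor <;> split_ifs at hc <;> omega

lemma exists_count_factorAt_eq (a n : ℕ) {i j : ℕ} {t : ℤ}
    (hi : ((factorAt w i n).count a : ℤ) ≤ t) (hj : t ≤ (factorAt w j n).count a) :
    ∃ l, ((factorAt w l n).count a : ℤ) = t :=
  exists_eq_of_abs_sub_le_one (abs_count_factorAt_succ_sub_le w a · n) hi hj

end Factor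

def zeroExcess (u : List ℕ) : ℤ := 3 * u.count 0 - u.length

lemma zeroExcess_append (u v : List ℕ) : zeroExcess (u ++ v) = zeroExcess u + zeroExcess v := by
  simp only [zeroExcess, List.count_append, List.length_append]
  push_cast
  ring

lemma zeroExcess_factorAt (w : ℕ → ℕ) (i n : ℕ) :
    zeroExcess (factorAt w i n) = 3 * ((factorAt w i n).count 0 : ℤ) - n := by
  rw [zeroExcess, length_factorAt]

lemma zeroExcess_factorAt_eq_sub (w : ℕ → ℕ) (i n : ℕ) : zeroExcess (factorAt w i n) =
    zeroExcess (factorAt w 0 (i + n)) - zeroExcess (factorAt w 0 i) := by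
  rw [factorAt_add w 0 i n, zeroExcess_append, zero_add]
  ring

lemma length_phiMap (x : ℕ) : (phiMap x).length = 5 := by
  unfold phiMap; split <;> rfl

lemma phiL_cons (a : ℕ) (l : List ℕ) : phiL (a :: l) = phiMap a ++ phiL l :=
  List.flatMap_cons

lemma length_phiL (l : List ℕ) : (phiL l).length = 5 * l.length := by
  induction l with
  | nil => rfl
  | cons a l ih => rw [phiL_cons, List.length_append, length_phiMap, ih, List.length_cons]; ring

lemma getElem?_phiL (l : List ℕ) (t : ℕ) {r : ℕ} (hr : r < 5) :
    (phiL l)[5 * t + r]? = l[t]?.bind fun a => (phiMap a)[r]? := by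
  induction l generalizing t with
  | nil => simp [phiL]
  | cons a l ih =>
    rw [phiL_cons]
    cases t with
    | zero => rw [List.getElem?_append_left (by rw [length_phiMap]; omega)]; simp
    | succ t =>
      rw [List.getElem?_append_right (by rw [length_phiMap]; omega), length_phiMap,
        show 5 * (t + 1) + r - 5 = 5 * t + r by omega, ih]
      rfl

def phiWord (k : ℕ) : List ℕ := phiL^[k] [0]

lemma phiWord_succ (k : ℕ) : phiWord (k + 1) = phiL (phiWord k) :=
  Function.iterate_succ_apply' _ _ _

lemma length_phiWord (k : ℕ) : (phiWord k).length = 5 ^ k := by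
  induction k with
  | zero => rfl
  | succ k ih => rw [phiWord_succ, length_phiL, ih, pow_succ, mul_comm]

lemma phiWord_prefix_succ (k : ℕ) : phiWord k <+: phiWord (k + 1) := by
  induction k with
  | zero => exact ⟨[0, 1, 0, 1], rfl⟩
  | succ k ih => rw [phiWord_succ, phiWord_succ (k + 1)]; exact ih.flatMap _

lemma phiWord_prefix_phiWord {k k' : ℕ} (h : k ≤ k') : phiWord k <+: phiWord k' := by
  induction k', h using Nat.le_induction with
  | base => exact List.prefix_refl _
  | succ k' _ ih => exact ih.trans (phiWord_prefix_succ k')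

lemma getElem?_phiWord {k m : ℕ} (h : m < 5 ^ k) : (phiWord k)[m]? = some (Phi m) := by
  have hm : m < (phiWord (m + 1)).length := by
    rw [length_phiWord]
    exact (Nat.lt_pow_self (by norm_num)).trans_le (Nat.pow_le_pow_right (by norm_num) m.le_succ)
  rw [← length_phiWord] at h
  rw [show Phi m = (phiWord (m + 1)).getD m 0 from rfl, List.getD_eq_getElem _ _ hm,
    List.getElem?_eq_getElem h, Option.some_inj]
  rcases le_total k (m + 1) with hk | hk
  · exact (phiWord_prefix_phiWord hk).getElem h
  · exact ((phiWord_prefix_phiWord hk).getElem hm).symm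

lemma getElem?_phiMap_Phi (t : ℕ) {r : ℕ} (hr : r < 5) :
    (phiMap (Phi t))[r]? = some (Phi (5 * t + r)) := by
  have ht : t < 5 ^ (t + 1) := Nat.lt_pow_self (by norm_num) |>.trans_le
    (Nat.pow_le_pow_right (by norm_num) t.le_succ)
  have h5t : 5 * t + r < 5 ^ (t + 1 + 1) := by rw [pow_succ]; omega
  rw [← getElem?_phiWord h5t, phiWord_succ, getElem?_phiL _ _ hr, getElem?_phiWord ht]
  rfl

lemma factorAt_Phi_five_mul_five (i : ℕ) : factorAt Phi (5 * i) 5 = phiMap (Phi i) := by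
  refine List.ext_getElem? fun r => ?_
  rcases lt_or_ge r 5 with hr | hr
  · rw [getElem?_phiMap_Phi i hr]
    simp [factorAt, hr]
  · rw [List.getElem?_eq_none (by simpa using hr),
      List.getElem?_eq_none (by rwa [length_phiMap])]

lemma factorAt_Phi_five_mul (i m : ℕ) :
    factorAt Phi (5 * i) (5 * m) = phiL (factorAt Phi i m) := by
  induction m with
  | zero => rfl
  | succ m ih =>
    rw [mul_add, mul_one, factorAt_add, ih, ← mul_add, factorAt_Phi_five_mul_five,
      factorAt_add Phi i m 1, factorAt_one, phiL, phiL, List.flatMap_append]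
    simp

lemma factorAt_Phi_five_mul_add (i m : ℕ) {r : ℕ} (hr : r ≤ 5) :
    factorAt Phi (5 * i) (5 * m + r) =
      phiL (factorAt Phi i m) ++ (phiMap (Phi (i + m))).take r := by
  rw [factorAt_add, factorAt_Phi_five_mul, ← mul_add, ← factorAt_Phi_five_mul_five,
    take_factorAt, min_eq_left hr]

lemma count_zero_phiL (u : List ℕ) : (phiL u).count 0 = 2 * u.count 0 + u.length := by
  induction u with
  | nil => rfl
  | cons a u ih =>
    rw [phiL_cons, List.count_append, ih, List.count_cons, List.length_cons]
    unfold phiMap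
    split_ifs <;> simp_all <;> omega

lemma zeroExcess_phiL (u : List ℕ) : zeroExcess (phiL u) = 2 * zeroExcess u := by
  simp only [zeroExcess, count_zero_phiL, length_phiL]
  push_cast
  ring

lemma zeroExcess_take_phiMap_mem_Icc (a : ℕ) {r : ℕ} (hr : r < 5) :
    zeroExcess ((phiMap a).take r) ∈ Set.Icc (-2) 5 := by
  unfold phiMap
  split_ifs <;> interval_cases r <;> decide

lemma zeroExcess_factorAt_Phi_five_mul_add (i m : ℕ) {r : ℕ} (hr : r < 5) :
    zeroExcess (factorAt Phi (5 * i) (5 * m + r)) ∈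
      Set.Icc (2 * zeroExcess (factorAt Phi i m) - 2) (2 * zeroExcess (factorAt Phi i m) + 5) := by
  obtain ⟨hlo, hhi⟩ := zeroExcess_take_phiMap_mem_Icc (Phi (i + m)) hr
  rw [factorAt_Phi_five_mul_add i m hr.le, zeroExcess_append, zeroExcess_phiL]
  constructor <;> linarith

/-- Fuelled evaluation of `(Φ n, |Φ[0, n)|_0)` through the base-5 digits of `n`, correct as long
as `n < 5 ^ f`; it lets the kernel check the base range of the induction. -/
def phiPrefixData : ℕ → ℕ → ℕ × ℕ
  | 0, _ => (0, 0)
  | f + 1, n =>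
    let p := phiPrefixData f (n / 5)
    ((phiMap p.1).getD (n % 5) 0, 2 * p.2 + n / 5 + ((phiMap p.1).take (n % 5)).count 0)

lemma phiPrefixData_eq {f n : ℕ} (h : n < 5 ^ f) :
    phiPrefixData f n = (Phi n, (factorAt Phi 0 n).count 0) := by
  induction f generalizing n with
  | zero =>
    obtain rfl : n = 0 := by simpa using h
    rfl
  | succ f ih =>
    have hr : n % 5 < 5 := Nat.mod_lt n (by norm_num)
    rw [phiPrefixData, ih (by rw [pow_succ] at h; omega)]
    conv_rhs => rw [← Nat.div_add_mod n 5]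
    have h0 := factorAt_Phi_five_mul_add 0 (n / 5) hr.le
    rw [mul_zero, zero_add] at h0
    rw [List.getD_eq_getElem?_getD, getElem?_phiMap_Phi _ hr, h0, List.count_append,
      count_zero_phiL, length_factorAt]
    rfl

set_option maxRecDepth 10000 in
lemma three_mul_phiPrefixData_ge :
    ∀ n < 660, 132 ≤ n → n + 12 ≤ 3 * (phiPrefixData 5 n).2 := by
  decide

set_option maxRecDepth 10000 in
lemma exists_phiPrefixData_le : ∀ n < 660, 132 ≤ n → ∃ i ∈ [5973, 5989],
    3 * (phiPrefixData 6 (i + n)).2 + 12 + n % 3 ≤ n + 3 * (phiPrefixData 6 i).2 := by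
  decide

lemma exists_zeroExcess_factorAt_Phi_ge : ∀ k n : ℕ, 132 * 5 ^ k ≤ n →
    ∃ i, 3 * ((k : ℤ) + 4) ≤ zeroExcess (factorAt Phi i n) := by
  refine Nat.induction_on_mul_pow_le (by norm_num) (by norm_num) (fun n hn hn' => ⟨0, ?_⟩)
    (fun k n _ ⟨i, hi⟩ => ⟨5 * i, ?_⟩)
    (fun k n ⟨i, hi⟩ => ⟨i, by push_cast at hi; linarith⟩)
  · have h := three_mul_phiPrefixData_ge n hn' hn
    rw [phiPrefixData_eq (by norm_num; omega)] at h
    rw [zeroExcess_factorAt]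
    push_cast
    omega
  · have h := (zeroExcess_factorAt_Phi_five_mul_add i (n / 5) (Nat.mod_lt n (by norm_num))).1
    rw [Nat.div_add_mod] at h
    push_cast
    linarith

lemma exists_zeroExcess_factorAt_Phi_add_mod_three_le : ∀ k n : ℕ, 132 * 5 ^ k ≤ n →
    ∃ i, zeroExcess (factorAt Phi i n) + (n % 3 : ℕ) ≤ -3 * ((k : ℤ) + 4) := by
  refine Nat.induction_on_mul_pow_le (by norm_num) (by norm_num) (fun n hn hn' => ?_)
    (fun k n _ ⟨i, hi⟩ => ⟨5 * i, ?_⟩)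
    (fun k n ⟨i, hi⟩ => ⟨i, by push_cast at hi ⊢; linarith⟩)
  · obtain ⟨i, hi, h⟩ := exists_phiPrefixData_le n hn' hn
    have hi : i ≤ 5989 := by simp at hi; omega
    rw [phiPrefixData_eq (by norm_num; omega), phiPrefixData_eq (by norm_num; omega)] at h
    refine ⟨i, ?_⟩
    rw [zeroExcess_factorAt_eq_sub, zeroExcess_factorAt, zeroExcess_factorAt]
    push_cast
    omega
  · have h := (zeroExcess_factorAt_Phi_five_mul_add i (n / 5) (Nat.mod_lt n (by norm_num))).2
    rw [Nat.div_add_mod] at h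
    push_cast at hi ⊢
    omega

/-- For every `C ≥ 4`, every `n ≥ 132 * 5^(C-4)`, and every integer `D` with
`-C ≤ D ≤ C`, Φ has a factor of length `n` with exactly `⌊n/3⌋ + D` zeros. -/
theorem Phi_parikh_interval (C : ℕ) (hC : 4 ≤ C) (n : ℕ)
    (hn : 132 * 5 ^ (C - 4) ≤ n) (D : ℤ) (hD1 : -(C : ℤ) ≤ D) (hD2 : D ≤ (C : ℤ)) :
    ∃ u : List ℕ, IsFactor Phi u ∧ u.length = n ∧
      (u.count 0 : ℤ) = (n / 3 : ℕ) + D := by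
  obtain ⟨i, hi⟩ := exists_zeroExcess_factorAt_Phi_ge (C - 4) n hn
  obtain ⟨j, hj⟩ := exists_zeroExcess_factorAt_Phi_add_mod_three_le (C - 4) n hn
  rw [zeroExcess_factorAt] at hi hj
  obtain ⟨l, hl⟩ := exists_count_factorAt_eq Phi 0 n (i := j) (j := i) (t := (n / 3 : ℕ) + D)
    (by omega) (by omega)
  exact ⟨factorAt Phi l n, ⟨l, by rw [length_factorAt]⟩, length_factorAt Phi l n, hl⟩
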